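/- arXiv:1005.1954 — 10 statements merged into one kernel-verified Lean document; each statement's English description precedes it below -/
import Mathlib

section
/- Every primitive inverse semigroup with zero is categorical at 0: if ab ≠ 0 and bc ≠ 0 then abc ≠ 0. -/
/-- An inverse semigroup structure on a semigroup with zero, given by an inverse map. -/
def IsInverseSemigroup (Q : Type*) [SemigroupWithZero Q] (inv : Q → Q) : Prop :=
  (∀ a : Q, a * inv a * a = a) ∧ (∀ a : Q, inv a * a * inv a = inv a) ∧
  (∀ e f : Q, e * e = e → f * f = f → e * f = f * e)

/-- A primitive inverse semigroup: all nonzero idempotents are primitive. -/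
def IsPrimitiveInvSemigroup (Q : Type*) [SemigroupWithZero Q] (inv : Q → Q) : Prop :=
  IsInverseSemigroup Q inv ∧
  ∀ e : Q, e * e = e → e ≠ 0 →
    ∀ f : Q, f * f = f → e * f = f → f * e = f → f = 0 ∨ f = e

/-- Green's R relation (via Q¹). -/
def GreenR {Q : Type*} [SemigroupWithZero Q] (a b : Q) : Prop :=
  a = b ∨ ∃ u v : Q, a * u = b ∧ b * v = a

/-- Green's L relation (via Q¹). -/
def GreenL {Q : Type*} [SemigroupWithZero Q] (a b : Q) : Prop :=
  a = b ∨ ∃ u v : Q, u * a = b ∧ v * b = a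

/-- Categorical at 0. -/
def CategoricalAtZero (S : Type*) [SemigroupWithZero S] : Prop :=
  ∀ a b c : S, a * b ≠ 0 → b * c ≠ 0 → a * b * c ≠ 0

/-- 0-cancellative. -/
def ZeroCancellative (S : Type*) [SemigroupWithZero S] : Prop :=
  (∀ a b c : S, a * b = a * c → a * b ≠ 0 → b = c) ∧
  (∀ a b c : S, b * a = c * a → b * a ≠ 0 → b = c)

/-- The relation R* on a semigroup, defined via S¹ = WithOne S. -/
def RStar {S : Type*} [SemigroupWithZero S] (a b : S) : Prop :=
  ∀ x y : WithOne S, x * (a : WithOne S) = y * (a : WithOne S) ↔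
    x * (b : WithOne S) = y * (b : WithOne S)

/-- The relation λ on a whole semigroup with zero. -/
def Lam {S : Type*} [SemigroupWithZero S] (a b : S) : Prop :=
  (a = 0 ∧ b = 0) ∨ ∃ x y : S, x * a = y * b ∧ x * a ≠ 0

/-- The relation λ relative to a subset S of Q. -/
def LamOn {Q : Type*} [SemigroupWithZero Q] (S : Set Q) (a b : Q) : Prop :=
  (a = 0 ∧ b = 0) ∨ ∃ x ∈ S, ∃ y ∈ S, x * a = y * b ∧ x * a ≠ 0

/-- The relation ρ relative to a subset S of Q. -/
def RhoOn {Q : Type*} [SemigroupWithZero Q] (S : Set Q) (a b : Q) : Prop :=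
  (a = 0 ∧ b = 0) ∨ ∃ x ∈ S, ∃ y ∈ S, a * x = b * y ∧ a * x ≠ 0

/-- The relation R* on a subset S of Q, defined via S¹. -/
def RStarOn {Q : Type*} [SemigroupWithZero Q] (S : Set Q) (a b : Q) : Prop :=
  (∀ x ∈ S, ∀ y ∈ S, (x * a = y * a ↔ x * b = y * b)) ∧
  (∀ x ∈ S, (x * a = a ↔ x * b = b)) ∧
  (∀ y ∈ S, (a = y * a ↔ b = y * b))

/-- S is a subsemigroup of Q. -/
def IsSubsemigroup {Q : Type*} [SemigroupWithZero Q] (S : Set Q) : Prop :=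
  ∀ a ∈ S, ∀ b ∈ S, a * b ∈ S

/-- S is a left I-order in Q (with respect to the inverse map `inv`). -/
def IsLeftIOrder {Q : Type*} [SemigroupWithZero Q] (S : Set Q) (inv : Q → Q) : Prop :=
  IsSubsemigroup S ∧ ∀ q : Q, ∃ a ∈ S, ∃ b ∈ S, q = inv a * b


/-!
In an inverse semigroup `a * b ≠ 0` forces the idempotents `a⁻¹ a` and `b b⁻¹` to have nonzero
product, and in a primitive one two idempotents with nonzero product coincide. Hence
`a⁻¹ a = b b⁻¹`, so `b = a⁻¹ a b` and `b * c = a⁻¹ (a * b * c)`.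
-/

namespace IsInverseSemigroup

variable {Q : Type*} [SemigroupWithZero Q] {inv : Q → Q}

theorem isIdempotentElem_inv_mul_self (hQ : IsInverseSemigroup Q inv) (a : Q) :
    IsIdempotentElem (inv a * a) := by
  rw [IsIdempotentElem, mul_assoc, ← mul_assoc a, hQ.1 a]

theorem isIdempotentElem_mul_inv_self (hQ : IsInverseSemigroup Q inv) (a : Q) :
    IsIdempotentElem (a * inv a) := by
  rw [IsIdempotentElem, ← mul_assoc, hQ.1 a]

theorem inv_mul_self_mul_mul_inv_self_ne_zero (hQ : IsInverseSemigroup Q inv) {a b : Q}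
    (hab : a * b ≠ 0) : inv a * a * (b * inv b) ≠ 0 := by
  intro h
  apply hab
  calc a * b = a * inv a * a * (b * inv b * b) := by rw [hQ.1 a, hQ.1 b]
    _ = a * (inv a * a * (b * inv b)) * b := by simp only [mul_assoc]
    _ = 0 := by rw [h, mul_zero, zero_mul]

end IsInverseSemigroup

namespace IsPrimitiveInvSemigroup

variable {Q : Type*} [SemigroupWithZero Q] {inv : Q → Q}

theorem eq_of_isIdempotentElem_of_mul_ne_zero (hQ : IsPrimitiveInvSemigroup Q inv) {e f : Q}
    (he : IsIdempotentElem e) (hf : IsIdempotentElem f) (hef : e * f ≠ 0) : e = f := by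
  have hcomm : Commute e f := hQ.1.2.2 e f he hf
  have hg : IsIdempotentElem (e * f) := he.mul_of_commute hcomm hf
  have he0 : e ≠ 0 := by rintro rfl; exact hef (zero_mul f)
  have hf0 : f ≠ 0 := by rintro rfl; exact hef (mul_zero e)
  obtain h | hfe := hQ.2 e he he0 (e * f) hg (by rw [← mul_assoc, he])
    (by rw [mul_assoc, ← hcomm.eq, ← mul_assoc, he])
  · exact absurd h hef
  obtain h | hff := hQ.2 f hf hf0 (e * f) hg (by rw [hcomm.eq, ← mul_assoc, hf])
    (by rw [mul_assoc, hf])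
  · exact absurd h hef
  exact hfe.symm.trans hff

theorem inv_mul_self_eq_mul_inv_self (hQ : IsPrimitiveInvSemigroup Q inv) {a b : Q}
    (hab : a * b ≠ 0) : inv a * a = b * inv b :=
  hQ.eq_of_isIdempotentElem_of_mul_ne_zero (hQ.1.isIdempotentElem_inv_mul_self a)
    (hQ.1.isIdempotentElem_mul_inv_self b) (hQ.1.inv_mul_self_mul_mul_inv_self_ne_zero hab)

end IsPrimitiveInvSemigroup

theorem stmt_4 {Q : Type*} [SemigroupWithZero Q] (inv : Q → Q)
    (hQ : IsPrimitiveInvSemigroup Q inv) : CategoricalAtZero Q := by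
  intro a b c hab hbc habc
  have hb : inv a * a * b = b := by rw [hQ.inv_mul_self_eq_mul_inv_self hab, hQ.1.1 b]
  apply hbc
  calc b * c = inv a * a * b * c := by rw [hb]
    _ = inv a * (a * b * c) := by simp only [mul_assoc]
    _ = 0 := by rw [habc, mul_zero]
end

section
/- Let S be a semigroup with zero that is categorical at 0 and 0-cancellative. If x ≠ 0 and xa ≠ 0, then x R* xa. -/
/-! Right multiplication by `a` is injective on the left multiples `S¹x` of `x`. Two
nonzero ones are separated by 0-cancellativity, and a nonzero `s * x` cannot be sent to `0`,
since `s * x * a = 0` with `x * a ≠ 0` would contradict categoricity at `0`. -/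

theorem rStar_iff {S : Type*} [SemigroupWithZero S] {a b : S} :
    RStar a b ↔ (∀ s t : S, s * a = t * a ↔ s * b = t * b) ∧ ∀ s : S, s * a = a ↔ s * b = b := by
  refine ⟨fun h => ⟨fun s t => ?_, fun s => ?_⟩, fun ⟨hst, hs⟩ u v => ?_⟩
  · simpa only [← WithOne.coe_mul, WithOne.coe_inj] using h s t
  · simpa only [← WithOne.coe_mul, one_mul, WithOne.coe_inj] using h s 1
  · induction u using WithOne.recOneCoe <;> induction v using WithOne.recOneCoe <;>
      simp only [← WithOne.coe_mul, one_mul, WithOne.coe_inj, hst, hs, eq_comm (a := a),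
        eq_comm (a := b)]

theorem CategoricalAtZero.mul_eq_zero_iff_mul_mul_eq_zero {S : Type*} [SemigroupWithZero S]
    (hcat : CategoricalAtZero S) {x a : S} (hxa : x * a ≠ 0) (s : S) :
    s * x = 0 ↔ s * (x * a) = 0 := by
  refine ⟨fun h => by rw [← mul_assoc, h, zero_mul], fun h => ?_⟩
  by_contra hsx
  exact hcat s x a hsx hxa (by rwa [mul_assoc])

theorem ZeroCancellative.mul_mul_eq_iff {S : Type*} [SemigroupWithZero S]
    (hcat : CategoricalAtZero S) (hcanc : ZeroCancellative S) {x a : S} (hxa : x * a ≠ 0)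
    (s t : S) : s * x = t * x ↔ s * (x * a) = t * (x * a) := by
  refine ⟨fun h => by rw [← mul_assoc, ← mul_assoc, h], fun h => ?_⟩
  by_cases hs : s * (x * a) = 0
  · have ht : t * (x * a) = 0 := h ▸ hs
    rw [(hcat.mul_eq_zero_iff_mul_mul_eq_zero hxa s).2 hs,
      (hcat.mul_eq_zero_iff_mul_mul_eq_zero hxa t).2 ht]
  · exact hcanc.2 a (s * x) (t * x) (by simpa only [mul_assoc] using h)
      (by rwa [mul_assoc])

theorem ZeroCancellative.mul_eq_self_iff {S : Type*} [SemigroupWithZero S]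
    (hcanc : ZeroCancellative S) {x a : S} (hxa : x * a ≠ 0) (s : S) :
    s * x = x ↔ s * (x * a) = x * a := by
  refine ⟨fun h => by rw [← mul_assoc, h], fun h => ?_⟩
  exact hcanc.2 a (s * x) x (by rwa [mul_assoc]) (by rwa [mul_assoc, h])

theorem stmt_7_general {S : Type*} [SemigroupWithZero S]
    (hcat : CategoricalAtZero S) (hcanc : ZeroCancellative S)
    (x a : S) (hxa : x * a ≠ 0) : RStar x (x * a) :=
  rStar_iff.2 ⟨hcanc.mul_mul_eq_iff hcat hxa, hcanc.mul_eq_self_iff hxa⟩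

theorem stmt_7 {S : Type*} [SemigroupWithZero S]
    (hcat : CategoricalAtZero S) (hcanc : ZeroCancellative S)
    (x a : S) (hx : x ≠ 0) (hxa : x * a ≠ 0) : RStar x (x * a) :=
  stmt_7_general hcat hcanc x a hxa
end

section
/- Let S be a subsemigroup of a primitive inverse semigroup Q with zero. If S is a left I-order in Q (every element of Q has the form a⁻¹b with a, b ∈ S), then 0 ∈ S. -/
/-!
Suppose `0 ∉ S` and write `0 = a⁻¹b` with `a, b ∈ S`. For every `c ∈ S` the product `ac ∈ S` is
nonzero, and `ac = a (a⁻¹a)(cc⁻¹) c`, so the idempotents `a⁻¹a` and `cc⁻¹` have nonzero product;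
by primitivity they are equal. Taking `c = a` and `c = b` gives `aa⁻¹ = bb⁻¹`, hence
`a⁻¹ = a⁻¹(aa⁻¹) = (a⁻¹b)b⁻¹ = 0` and `a = aa⁻¹a = 0 ∈ S`.
-/

namespace IsInverseSemigroup

variable {Q : Type*} [SemigroupWithZero Q] {inv : Q → Q}

theorem mul_eq_zero_of_idempotents_mul_eq_zero (hQ : IsInverseSemigroup Q inv) {a b : Q}
    (h : inv a * a * (b * inv b) = 0) : a * b = 0 :=
  calc a * b = a * inv a * a * (b * inv b * b) := by rw [hQ.1, hQ.1]
    _ = a * (inv a * a * (b * inv b)) * b := by simp only [mul_assoc]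
    _ = 0 := by rw [h, mul_zero, zero_mul]

theorem inv_eq_zero_of_inv_mul_eq_zero (hQ : IsInverseSemigroup Q inv) {a b : Q}
    (hab : inv a * b = 0) (heq : a * inv a = b * inv b) : inv a = 0 :=
  calc inv a = inv a * (a * inv a) := by rw [← mul_assoc, hQ.2.1]
    _ = inv a * b * inv b := by rw [heq, mul_assoc]
    _ = 0 := by rw [hab, zero_mul]

theorem eq_zero_of_inv_eq_zero (hQ : IsInverseSemigroup Q inv) {a : Q} (h : inv a = 0) :
    a = 0 := by
  rw [← hQ.1 a, h, mul_zero, zero_mul]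

end IsInverseSemigroup

theorem IsPrimitiveInvSemigroup.eq_of_mul_ne_zero {Q : Type*} [SemigroupWithZero Q]
    {inv : Q → Q} (hQ : IsPrimitiveInvSemigroup Q inv) {e f : Q} (he : IsIdempotentElem e)
    (hf : IsIdempotentElem f) (hef : e * f ≠ 0) : e = f := by
  have hcomm : Commute e f := hQ.1.2.2 e f he hf
  have hidem : IsIdempotentElem (e * f) := IsIdempotentElem.mul_of_commute hcomm he hf
  have he0 : e ≠ 0 := by rintro rfl; exact hef (zero_mul f)
  have hf0 : f ≠ 0 := by rintro rfl; exact hef (mul_zero e)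
  have hle : e * (e * f) = e * f ∧ (e * f) * e = e * f := by
    refine ⟨by rw [← mul_assoc, he.eq], ?_⟩
    rw [mul_assoc, ← hcomm.eq, ← mul_assoc, he.eq]
  have hlf : f * (e * f) = e * f ∧ (e * f) * f = e * f := by
    refine ⟨by rw [← mul_assoc, ← hcomm.eq, mul_assoc, hf.eq], by rw [mul_assoc, hf.eq]⟩
  have hefe := (hQ.2 e he.eq he0 _ hidem.eq hle.1 hle.2).resolve_left hef
  have heff := (hQ.2 f hf.eq hf0 _ hidem.eq hlf.1 hlf.2).resolve_left hef
  exact hefe.symm.trans heff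

theorem stmt_8 {Q : Type*} [SemigroupWithZero Q] (inv : Q → Q)
    (hQ : IsPrimitiveInvSemigroup Q inv) (S : Set Q)
    (hS : IsLeftIOrder S inv) : (0 : Q) ∈ S := by
  obtain ⟨hSmul, hrep⟩ := hS
  obtain ⟨a, ha, b, hb, hab⟩ := hrep 0
  by_contra h0
  have hne : ∀ c ∈ S, a * c ≠ 0 := fun c hc h => h0 (h ▸ hSmul a ha c hc)
  have heq : ∀ c ∈ S, inv a * a = c * inv c := fun c hc =>
    hQ.eq_of_mul_ne_zero (hQ.1.isIdempotentElem_inv_mul_self a)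
      (hQ.1.isIdempotentElem_mul_inv_self c)
      (mt hQ.1.mul_eq_zero_of_idempotents_mul_eq_zero (hne c hc))
  have hinv : inv a = 0 :=
    hQ.1.inv_eq_zero_of_inv_mul_eq_zero hab.symm ((heq a ha).symm.trans (heq b hb))
  exact h0 (hQ.1.eq_zero_of_inv_eq_zero hinv ▸ ha)
end

section
/- Let S be a left I-order in a primitive inverse semigroup Q with zero. Then for a, b ∈ S, a L b in Q if and only if a λ b in S, where a λ b means a = b = 0 or Sa ∩ Sb ≠ {0}. -/
/-!
Everything rests on one feature of primitive inverse semigroups: a nonzero product of two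
idempotents forces them to be equal, so an idempotent either annihilates an element or fixes it.
If `x a = y b ≠ 0`, then `b (a⁻¹a)` is nonzero (it is hit by `y`), hence equals `b`, and
symmetrically; this gives `a L b`. Conversely, if `b (a⁻¹a) = b ≠ 0`, write `b a⁻¹ = c⁻¹ d`
with `c, d ∈ S`; then `b = c⁻¹ (d a)`, and `c c⁻¹` fixes `d a`, so `c b = d a ≠ 0`.
-/

section

variable {Q : Type*} [SemigroupWithZero Q] {inv : Q → Q}

namespace IsInverseSemigroup

variable (hQ : IsInverseSemigroup Q inv)
include hQ

theorem mul_inv_mul_self (a : Q) : a * (inv a * a) = a := by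
  rw [← mul_assoc, hQ.1 a]

theorem isIdempotentElem_inv_mul (a : Q) : IsIdempotentElem (inv a * a) := by
  rw [IsIdempotentElem, mul_assoc, hQ.mul_inv_mul_self]

theorem isIdempotentElem_mul_inv (a : Q) : IsIdempotentElem (a * inv a) := by
  rw [IsIdempotentElem, ← mul_assoc, hQ.1 a]

end IsInverseSemigroup

namespace IsPrimitiveInvSemigroup

variable (hQ : IsPrimitiveInvSemigroup Q inv)
include hQ

theorem eq_of_mul_ne_zero_s9 {e f : Q} (he : IsIdempotentElem e) (hf : IsIdempotentElem f)
    (hef : e * f ≠ 0) : e = f := by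
  have hcomm : e * f = f * e := hQ.1.2.2 e f he hf
  have hidem : (e * f) * (e * f) = e * f := (he.mul_of_commute hcomm hf).eq
  have he0 : e ≠ 0 := fun h => hef (by rw [h, zero_mul])
  have hf0 : f ≠ 0 := fun h => hef (by rw [h, mul_zero])
  have hef_e : e * f = e := (hQ.2 e he he0 (e * f) hidem (by rw [← mul_assoc, he.eq])
    (by rw [mul_assoc, ← hcomm, ← mul_assoc, he.eq])).resolve_left hef
  have hef_f : e * f = f := (hQ.2 f hf hf0 (e * f) hidem
    (by rw [← mul_assoc, ← hcomm, mul_assoc, hf.eq]) (by rw [mul_assoc, hf.eq])).resolve_left hef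
  exact hef_e.symm.trans hef_f

theorem mul_idem_eq_self_of_ne_zero {f d : Q} (hf : IsIdempotentElem f) (hdf : d * f ≠ 0) :
    d * f = d := by
  have hd : d * (inv d * d) = d := hQ.1.mul_inv_mul_self d
  have hne : inv d * d * f ≠ 0 := fun h => hdf (by rw [← hd, mul_assoc, h, mul_zero])
  rw [← hQ.eq_of_mul_ne_zero_s9 (hQ.1.isIdempotentElem_inv_mul d) hf hne, hd]

theorem idem_mul_eq_self_of_ne_zero {f d : Q} (hf : IsIdempotentElem f) (hfd : f * d ≠ 0) :
    f * d = d := by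
  have hd : d * inv d * d = d := hQ.1.1 d
  have hne : f * (d * inv d) ≠ 0 := fun h => hfd (by rw [← hd, ← mul_assoc, h, zero_mul])
  rw [hQ.eq_of_mul_ne_zero_s9 hf (hQ.1.isIdempotentElem_mul_inv d) hne, hd]

theorem mul_eq_of_eq_inv_mul {b c x : Q} (hb : b = inv c * x) (hb0 : b ≠ 0) : c * b = x := by
  have hx : inv c * (c * inv c * x) = b := by rw [← mul_assoc, ← mul_assoc, hQ.1.2.1 c, hb]
  have hne : c * inv c * x ≠ 0 := fun h => hb0 (by rw [← hx, h, mul_zero])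
  rw [hb, ← mul_assoc, hQ.idem_mul_eq_self_of_ne_zero (hQ.1.isIdempotentElem_mul_inv c) hne]

theorem mul_inv_mul_eq_self_of_mul_eq {a b x y : Q} (hxy : x * a = y * b) (hne : x * a ≠ 0) :
    b * (inv a * a) = b := by
  have hy : y * (b * (inv a * a)) = x * a := by
    rw [← mul_assoc, ← hxy, mul_assoc, hQ.1.mul_inv_mul_self]
  exact hQ.mul_idem_eq_self_of_ne_zero (hQ.1.isIdempotentElem_inv_mul a)
    fun h => hne (by rw [← hy, h, mul_zero])

end IsPrimitiveInvSemigroup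

namespace GreenL

theorem eq_zero_of_eq_zero {a b : Q} (h : GreenL a b) (hb : b = 0) : a = 0 := by
  rcases h with rfl | ⟨_, v, _, rfl⟩
  · exact hb
  · rw [hb, mul_zero]

theorem mul_inv_mul_eq_self (hQ : IsInverseSemigroup Q inv) {a b : Q} (h : GreenL a b) :
    b * (inv a * a) = b := by
  rcases h with rfl | ⟨u, _, rfl, _⟩
  · exact hQ.mul_inv_mul_self a
  · rw [mul_assoc, hQ.mul_inv_mul_self]

end GreenL

end

theorem stmt_9 {Q : Type*} [SemigroupWithZero Q] (inv : Q → Q)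
    (hQ : IsPrimitiveInvSemigroup Q inv) (S : Set Q)
    (hS : IsLeftIOrder S inv) :
    ∀ a ∈ S, ∀ b ∈ S, (GreenL a b ↔ LamOn S a b) := by
  intro a _ b _
  constructor
  · intro hL
    by_cases hb0 : b = 0
    · exact Or.inl ⟨hL.eq_zero_of_eq_zero hb0, hb0⟩
    obtain ⟨c, hc, d, hd, hcd⟩ := hS.2 (b * inv a)
    have hb : b = inv c * (d * a) := by
      rw [← mul_assoc, ← hcd, mul_assoc, hL.mul_inv_mul_eq_self hQ.1]
    have hda : d * a ≠ 0 := fun h => hb0 (by rw [hb, h, mul_zero])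
    exact Or.inr ⟨d, hd, c, hc, (hQ.mul_eq_of_eq_inv_mul hb hb0).symm, hda⟩
  · rintro (⟨rfl, rfl⟩ | ⟨x, _, y, _, hxy, hne⟩)
    · exact Or.inl rfl
    · refine Or.inr ⟨b * inv a, a * inv b, ?_, ?_⟩
      · rw [mul_assoc, hQ.mul_inv_mul_eq_self_of_mul_eq hxy hne]
      · rw [mul_assoc, hQ.mul_inv_mul_eq_self_of_mul_eq hxy.symm (hxy ▸ hne)]
end

section
/- Let S be a left I-order in a primitive inverse semigroup Q with zero. Then Sa ≠ {0} for every nonzero a ∈ S. -/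
theorem mul_ne_zero_of_inv_eq_inv_mul {Q : Type*} [SemigroupWithZero Q] {inv : Q → Q}
    {a b c : Q} (hreg : a * inv a * a = a) (hinv : inv a = inv b * c) (ha : a ≠ 0) :
    c * a ≠ 0 := by
  intro hca
  have : a = a * inv b * (c * a) := by
    conv_lhs => rw [← hreg, hinv]
    simp only [mul_assoc]
  exact ha (by rw [this, hca, mul_zero])

theorem stmt_11 {Q : Type*} [SemigroupWithZero Q] (inv : Q → Q)
    (hQ : IsPrimitiveInvSemigroup Q inv) (S : Set Q)
    (hS : IsLeftIOrder S inv) :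
    ∀ a ∈ S, a ≠ 0 → ∃ x ∈ S, x * a ≠ 0 := by
  intro a _ ha
  obtain ⟨b, -, c, hc, hinv⟩ := hS.2 (inv a)
  exact ⟨c, hc, mul_ne_zero_of_inv_eq_inv_mul (hQ.1.1 a) hinv ha⟩
end

section
/- Let S be a left I-order in a primitive inverse semigroup Q with zero. Define a ρ b on S by a = b = 0 or aS ∩ bS ≠ {0}. Then ρ ⊆ R*. -/
/-!
If `a * x ≠ 0` in a primitive inverse semigroup, then `a⁻¹a · xx⁻¹` is a nonzero idempotent
below the primitive idempotent `a⁻¹a`, hence equal to it, and so `a * (x * x⁻¹) = a`.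
Consequently `a * x = b * y ≠ 0` gives `b = a * (x * y⁻¹)` and `a = b * (y * x⁻¹)`: the
elements `a` and `b` are `R`-related in `Q`, and `R` in `Q` implies `R*` on any subset.
-/

section

variable {Q : Type*} [SemigroupWithZero Q] {inv : Q → Q}

theorem IsInverseSemigroup.mul_self_eq_of_idempotent (hQ : IsInverseSemigroup Q inv) {e f : Q}
    (he : e * e = e) (hf : f * f = f) : e * f * (e * f) = e * f := by
  calc e * f * (e * f) = e * (f * e) * f := by simp only [mul_assoc]
    _ = e * e * (f * f) := by rw [← hQ.2.2 e f he hf]; simp only [mul_assoc]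
    _ = e * f := by rw [he, hf]

theorem IsPrimitiveInvSemigroup.mul_mul_inv_eq_self (hQ : IsPrimitiveInvSemigroup Q inv)
    {a x : Q} (hax : a * x ≠ 0) : a * (x * inv x) = a := by
  obtain ⟨hreg, hreg_inv, hcomm⟩ := hQ.1
  set e := inv a * a
  set f := x * inv x
  have he : e * e = e := by rw [← mul_assoc, hreg_inv]
  have hf : f * f = f := by rw [← mul_assoc, hreg]
  have hae : a * e = a := by rw [← mul_assoc, hreg]
  have hafx : a * f * x = a * x := by simp only [f, mul_assoc]; rw [← mul_assoc x, hreg]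
  have haef : a * (e * f) = a * f := by rw [← mul_assoc, hae]
  have hef : e * f ≠ 0 := by
    intro h0
    apply hax
    rw [← hafx, ← haef, h0, mul_zero, zero_mul]
  have he0 : e ≠ 0 := by
    intro h0
    exact hef (by rw [h0, zero_mul])
  rcases hQ.2 e he he0 (e * f) (hQ.1.mul_self_eq_of_idempotent he hf)
      (by rw [← mul_assoc, he]) (by rw [hcomm e f he hf, mul_assoc, he]) with h0 | hefe
  · exact absurd h0 hef
  · rw [← haef, hefe, hae]

theorem IsPrimitiveInvSemigroup.greenR_of_rhoOn (hQ : IsPrimitiveInvSemigroup Q inv)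
    {S : Set Q} {a b : Q} (h : RhoOn S a b) : GreenR a b := by
  rcases h with ⟨rfl, rfl⟩ | ⟨x, -, y, -, hxy, hne⟩
  · exact Or.inl rfl
  · refine Or.inr ⟨x * inv y, y * inv x, ?_, ?_⟩
    · rw [← mul_assoc, hxy, mul_assoc, hQ.mul_mul_inv_eq_self (hxy ▸ hne)]
    · rw [← mul_assoc, ← hxy, mul_assoc, hQ.mul_mul_inv_eq_self hne]

end

theorem RStarOn.of_greenR {Q : Type*} [SemigroupWithZero Q] {S : Set Q} {a b : Q}
    (h : GreenR a b) : RStarOn S a b := by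
  have transfer : ∀ {c d w : Q}, c * w = d → ∀ x y : Q, x * c = y * c → x * d = y * d := by
    intro c d w hd x y hxy
    rw [← hd, ← mul_assoc, hxy, mul_assoc]
  have transfer_self : ∀ {c d w : Q}, c * w = d → ∀ x : Q, x * c = c → x * d = d := by
    intro c d w hd x hx
    rw [← hd, ← mul_assoc, hx]
  rcases h with rfl | ⟨u, v, hu, hv⟩
  · exact ⟨fun _ _ _ _ => Iff.rfl, fun _ _ => Iff.rfl, fun _ _ => Iff.rfl⟩
  · exact ⟨fun x _ y _ => ⟨transfer hu x y, transfer hv x y⟩,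
      fun x _ => ⟨transfer_self hu x, transfer_self hv x⟩,
      fun y _ => ⟨fun h => (transfer_self hu y h.symm).symm,
        fun h => (transfer_self hv y h.symm).symm⟩⟩

theorem stmt_13_general {Q : Type*} [SemigroupWithZero Q] (inv : Q → Q)
    (hQ : IsPrimitiveInvSemigroup Q inv) (S : Set Q) :
    ∀ a ∈ S, ∀ b ∈ S, RhoOn S a b → RStarOn S a b :=
  fun _ _ _ _ hρ => RStarOn.of_greenR (hQ.greenR_of_rhoOn hρ)

theorem stmt_13 {Q : Type*} [SemigroupWithZero Q] (inv : Q → Q)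
    (hQ : IsPrimitiveInvSemigroup Q inv) (S : Set Q)
    (hS : IsLeftIOrder S inv) :
    ∀ a ∈ S, ∀ b ∈ S, RhoOn S a b → RStarOn S a b :=
  stmt_13_general inv hQ S
end

section
/- Let S be a semigroup with zero that is categorical at 0, is 0-cancellative, has λ transitive (where a λ b iff a = b = 0 or Sa ∩ Sb ≠ {0}), and satisfies Sa ≠ {0} for all nonzero a ∈ S. On Σ* = {(a,b) : a R* b, a,b ≠ 0} define (a,b) ∼ (c,d) iff there exist x,y ∈ S with xa = yc ≠ 0 and xb = yd ≠ 0, and let (0,0) form its own class. Then ∼ is an equivalence relation on Σ = Σ* ∪ {(0,0)}. -/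
/-!
Transitivity is the only real point: from `x₁ a = y₁ c`, `x₁ b = y₁ d` and `u c = v e`, `u d = v f`
one needs `s y₁ = t u` with `s y₁ c ≠ 0`. Both `y₁ c` and `u c` are `λ`-related to `c`, so by
transitivity of `λ` some `s (y₁ c) = t (u c) ≠ 0`, and right 0-cancellation of `c` gives
`s y₁ = t u`. Then `s x₁`, `t v` relate `(a, b)` to `(e, f)`; that `s y₁ d ≠ 0` follows from
categoricity at `0`, since `s y₁ ≠ 0` and `y₁ d ≠ 0`.
-/

section

variable {S : Type*} [SemigroupWithZero S]

theorem RStar.mul_eq_mul_iff {a b : S} (h : RStar a b) (x y : S) :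
    x * a = y * a ↔ x * b = y * b := by
  simpa only [← WithOne.coe_mul, WithOne.coe_inj] using h x y

theorem RStar.mul_ne_zero_iff {a b : S} (h : RStar a b) (x : S) :
    x * a ≠ 0 ↔ x * b ≠ 0 := by
  simpa only [zero_mul] using (h.mul_eq_mul_iff x 0).not

theorem Lam.symm {a b : S} : Lam a b → Lam b a
  | .inl ⟨ha, hb⟩ => .inl ⟨hb, ha⟩
  | .inr ⟨x, y, h, hx⟩ => .inr ⟨y, x, h.symm, h ▸ hx⟩

theorem lam_mul_left_self (hD : ∀ a : S, a ≠ 0 → ∃ x : S, x * a ≠ 0) {y c : S}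
    (h : y * c ≠ 0) : Lam (y * c) c := by
  obtain ⟨s, hs⟩ := hD (y * c) h
  exact .inr ⟨s, s * y, (mul_assoc s y c).symm, hs⟩

theorem exists_mul_eq_mul_of_mul_ne_zero (hcanc : ZeroCancellative S)
    (htrans : ∀ ⦃a b c : S⦄, Lam a b → Lam b c → Lam a c)
    (hD : ∀ a : S, a ≠ 0 → ∃ x : S, x * a ≠ 0)
    {y u c : S} (hy : y * c ≠ 0) (hu : u * c ≠ 0) :
    ∃ s t : S, s * y = t * u ∧ s * y * c ≠ 0 := by
  rcases htrans (lam_mul_left_self hD hy) (lam_mul_left_self hD hu).symm with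
    ⟨h0, -⟩ | ⟨s, t, hst, hne⟩
  · exact absurd h0 hy
  rw [← mul_assoc, ← mul_assoc] at hst
  rw [← mul_assoc] at hne
  exact ⟨s, t, hcanc.2 c _ _ hst hne, hne⟩

def PairRel (p q : S × S) : Prop :=
  ∃ x y : S, x * p.1 = y * q.1 ∧ x * p.1 ≠ 0 ∧ x * p.2 = y * q.2 ∧ x * p.2 ≠ 0

theorem pairRel_iff {p q : S × S} :
    PairRel p q ↔ ∃ x y : S, x ≠ 0 ∧ y ≠ 0 ∧
      x * p.1 = y * q.1 ∧ x * p.1 ≠ 0 ∧ x * p.2 = y * q.2 ∧ x * p.2 ≠ 0 := by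
  constructor
  · rintro ⟨x, y, h₁, hn₁, h₂, hn₂⟩
    exact ⟨x, y, left_ne_zero_of_mul hn₁, left_ne_zero_of_mul (h₁ ▸ hn₁), h₁, hn₁, h₂, hn₂⟩
  · rintro ⟨x, y, -, -, h⟩
    exact ⟨x, y, h⟩

theorem PairRel.fst_ne_zero {p q : S × S} (h : PairRel p q) : p.1 ≠ 0 := by
  obtain ⟨x, -, -, hn, -⟩ := h
  exact right_ne_zero_of_mul hn

theorem PairRel.symm {p q : S × S} (h : PairRel p q) : PairRel q p := by
  obtain ⟨x, y, h₁, hn₁, h₂, hn₂⟩ := h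
  exact ⟨y, x, h₁.symm, h₁ ▸ hn₁, h₂.symm, h₂ ▸ hn₂⟩

theorem pairRel_refl (hD : ∀ a : S, a ≠ 0 → ∃ x : S, x * a ≠ 0) {p : S × S}
    (hp : p.1 ≠ 0) (hR : RStar p.1 p.2) : PairRel p p := by
  obtain ⟨x, hx⟩ := hD p.1 hp
  exact ⟨x, x, rfl, hx, rfl, (hR.mul_ne_zero_iff x).1 hx⟩

theorem PairRel.trans (hcat : CategoricalAtZero S) (hcanc : ZeroCancellative S)
    (htrans : ∀ ⦃a b c : S⦄, Lam a b → Lam b c → Lam a c)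
    (hD : ∀ a : S, a ≠ 0 → ∃ x : S, x * a ≠ 0)
    {p q r : S × S} (hpq : PairRel p q) (hqr : PairRel q r) : PairRel p r := by
  obtain ⟨x, y, h₁, hn₁, h₂, hn₂⟩ := hpq
  obtain ⟨u, v, k₁, kn₁, k₂, -⟩ := hqr
  obtain ⟨s, t, hst, hne⟩ :=
    exists_mul_eq_mul_of_mul_ne_zero hcanc htrans hD (h₁ ▸ hn₁) kn₁
  have hsy : s * y ≠ 0 := left_ne_zero_of_mul hne
  have hfst : s * x * p.1 = t * v * r.1 := by
    rw [mul_assoc, h₁, ← mul_assoc, hst, mul_assoc, k₁, mul_assoc]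
  have hsnd : s * x * p.2 = t * v * r.2 := by
    rw [mul_assoc, h₂, ← mul_assoc, hst, mul_assoc, k₂, mul_assoc]
  refine ⟨s * x, t * v, hfst, ?_, hsnd, ?_⟩
  · rwa [mul_assoc, h₁, ← mul_assoc]
  · rw [mul_assoc, h₂, ← mul_assoc]
    exact hcat s y q.2 hsy (h₂ ▸ hn₂)

end

theorem stmt_15 {S : Type*} [SemigroupWithZero S]
    (hcat : CategoricalAtZero S) (hcanc : ZeroCancellative S)
    (htrans : Transitive (Lam (S := S)))
    (hD : ∀ a : S, a ≠ 0 → ∃ x : S, x * a ≠ 0) :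
    Equivalence (fun (p q : {p : S × S //
        (p.1 ≠ 0 ∧ p.2 ≠ 0 ∧ RStar p.1 p.2) ∨ (p.1 = 0 ∧ p.2 = 0)}) =>
      (p.val.1 = 0 ∧ p.val.2 = 0 ∧ q.val.1 = 0 ∧ q.val.2 = 0) ∨
      ∃ x y : S, x ≠ 0 ∧ y ≠ 0 ∧
        x * p.val.1 = y * q.val.1 ∧ x * p.val.1 ≠ 0 ∧
        x * p.val.2 = y * q.val.2 ∧ x * p.val.2 ≠ 0) := by
  simp_rw [← pairRel_iff]
  refine ⟨?refl, ?symm, ?trans⟩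
  · rintro ⟨p, ⟨hp, -, hR⟩ | ⟨h₁, h₂⟩⟩
    exacts [.inr (pairRel_refl hD hp hR), .inl ⟨h₁, h₂, h₁, h₂⟩]
  · rintro p q (⟨h₁, h₂, h₃, h₄⟩ | h)
    exacts [.inl ⟨h₃, h₄, h₁, h₂⟩, .inr h.symm]
  · rintro p q r (⟨h₁, h₂, h₃, -⟩ | h) (⟨h₁', -, h₃', h₄'⟩ | h')
    · exact .inl ⟨h₁, h₂, h₃', h₄'⟩
    · exact absurd h₃ h'.fst_ne_zero
    · exact absurd h₁' h.symm.fst_ne_zero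
    · exact .inr (h.trans hcat hcanc htrans hD h')
end

section
/- Let S be a semigroup with zero which is categorical at 0 and 0-cancellative, and let a,b,c,d,s,t,x,y be nonzero elements of S satisfying sa = tc ≠ 0, sb = td ≠ 0, and xa = yc ≠ 0, where additionally sa λ xa (there exist w,z ∈ S with zsa = wxa ≠ 0). Then xb = yd ≠ 0. -/
namespace ZeroCancellative

variable {S : Type*} [SemigroupWithZero S]

theorem mul_eq_mul_of_mul_mul_eq (hcanc : ZeroCancellative S) {p q p' q' a : S}
    (heq : p * (q * a) = p' * (q' * a)) (hne : p * (q * a) ≠ 0) : p * q = p' * q' :=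
  hcanc.2 a _ _ (by simpa only [mul_assoc] using heq) (by rwa [mul_assoc])

end ZeroCancellative

theorem stmt_16_general {S : Type*} [SemigroupWithZero S]
    (hcat : CategoricalAtZero S) (hcanc : ZeroCancellative S)
    (a b c d s t x y : S)
    (h1 : s * a = t * c)
    (h2 : s * b = t * d) (h2' : s * b ≠ 0)
    (h3 : x * a = y * c)
    (hlam : ∃ w z : S, z * (s * a) = w * (x * a) ∧ z * (s * a) ≠ 0) :
    x * b = y * d ∧ x * b ≠ 0 := by
  obtain ⟨w, z, heq, hne⟩ := hlam
  have hzs : z * s = w * x := hcanc.mul_eq_mul_of_mul_mul_eq heq hne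
  have hzt : z * t = w * y :=
    hcanc.mul_eq_mul_of_mul_mul_eq (by rwa [← h1, ← h3]) (by rwa [← h1])
  have hzsb : z * s * b ≠ 0 := hcat z s b (left_ne_zero_of_mul (by rwa [mul_assoc])) h2'
  have hwxb : w * (x * b) ≠ 0 := by rwa [← mul_assoc, ← hzs]
  refine ⟨hcanc.1 w _ _ ?_ hwxb, right_ne_zero_of_mul hwxb⟩
  calc w * (x * b) = z * s * b := by rw [← mul_assoc, hzs]
    _ = z * (t * d) := by rw [mul_assoc, h2]
    _ = w * (y * d) := by rw [← mul_assoc, hzt, mul_assoc]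

theorem stmt_16 {S : Type*} [SemigroupWithZero S]
    (hcat : CategoricalAtZero S) (hcanc : ZeroCancellative S)
    (a b c d s t x y : S)
    (ha : a ≠ 0) (hb : b ≠ 0) (hc : c ≠ 0) (hd : d ≠ 0)
    (hs : s ≠ 0) (ht : t ≠ 0) (hx : x ≠ 0) (hy : y ≠ 0)
    (h1 : s * a = t * c) (h1' : s * a ≠ 0)
    (h2 : s * b = t * d) (h2' : s * b ≠ 0)
    (h3 : x * a = y * c) (h3' : x * a ≠ 0)
    (hlam : ∃ w z : S, z * (s * a) = w * (x * a) ∧ z * (s * a) ≠ 0) :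
    x * b = y * d ∧ x * b ≠ 0 :=
  stmt_16_general hcat hcanc a b c d s t x y h1 h2 h2' h3 hlam
end

section
/- Let H be a left order in a group G (every element of G is of the form a⁻¹b with a,b ∈ H), let B = B(G,I) be the Brandt semigroup over G with index set I having |I| ≥ 2, and fix i ∈ I. Then S_i = {(i,h,j) : h ∈ H, j ∈ I} ∪ {0} is a subsemigroup of B and is a straight left I-order in B: every element of B is of the form s⁻¹t with s,t ∈ S_i. -/
/-- The Brandt semigroup B(G,I): underlying set (I × G × I) ∪ {0}. -/
abbrev Brandt (G I : Type*) := Option (I × G × I)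

instance {G I : Type*} [Group G] [DecidableEq I] : Mul (Brandt G I) :=
  ⟨fun a b =>
    match a, b with
    | some (i, g, j), some (k, h, l) => if j = k then some (i, g * h, l) else none
    | _, _ => none⟩

instance {G I : Type*} : Zero (Brandt G I) := ⟨none⟩

/-- The inverse map of the Brandt semigroup: (i,a,j)⁻¹ = (j,a⁻¹,i). -/
def Brandt.inv {G I : Type*} [Group G] : Brandt G I → Brandt G I
  | some (i, g, j) => some (j, g⁻¹, i)
  | none => none


/-!
Writing `g = a⁻¹ * b` with `a b ∈ H`, every nonzero element factors as
`(k, g, l) = (i, a, k)⁻¹ * (i, b, l)`, and both factors lie in the `i`-th row, where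
`s * s⁻¹ = (i, 1, i)` for every nonzero `s`; so the two factors are `R`-related.
-/

namespace Brandt

def row {G I : Type*} (H : Set G) (i : I) : Set (Brandt G I) :=
  {x | x = 0 ∨ ∃ h ∈ H, ∃ j : I, x = some (i, h, j)}

theorem zero_mem_row {G I : Type*} (H : Set G) (i : I) : (0 : Brandt G I) ∈ row H i :=
  Or.inl rfl

theorem some_mem_row {G I : Type*} {H : Set G} {h : G} (hh : h ∈ H) (i j : I) :
    (some (i, h, j) : Brandt G I) ∈ row H i :=
  Or.inr ⟨h, hh, j, rfl⟩

variable {G I : Type*} [Group G] [DecidableEq I]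

theorem some_mul_some (i j k l : I) (g h : G) :
    (some (i, g, j) * some (k, h, l) : Brandt G I) =
      if j = k then some (i, g * h, l) else 0 :=
  rfl

theorem some_mul_some_of_eq (i j l : I) (g h : G) :
    (some (i, g, j) * some (j, h, l) : Brandt G I) = some (i, g * h, l) :=
  if_pos rfl

theorem mul_zero (x : Brandt G I) : x * 0 = 0 := by
  cases x <;> rfl

theorem inv_some_mul_some (i k l : I) (a b : G) :
    inv (some (i, a, k)) * (some (i, b, l) : Brandt G I) = some (k, a⁻¹ * b, l) :=
  some_mul_some_of_eq k i l a⁻¹ b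

theorem some_mul_inv_some (i k : I) (a : G) :
    (some (i, a, k) : Brandt G I) * inv (some (i, a, k)) = some (i, 1, i) := by
  rw [inv, some_mul_some_of_eq, mul_inv_cancel]

theorem mul_mem_row {H : Set G} (hH : ∀ a ∈ H, ∀ b ∈ H, a * b ∈ H) (i : I) :
    ∀ x ∈ row H i, ∀ y ∈ row H i, x * y ∈ row H i := by
  rintro x (rfl | ⟨g, hg, j, rfl⟩) y (rfl | ⟨h, hh, l, rfl⟩)
  · exact zero_mem_row H i
  · exact zero_mem_row H i
  · rw [Brandt.mul_zero]
    exact zero_mem_row H i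
  · rw [some_mul_some]
    split_ifs
    · exact some_mem_row (hH g hg h hh) i l
    · exact zero_mem_row H i

theorem exists_eq_inv_mul_row {H : Set G} (hH : ∀ g : G, ∃ a ∈ H, ∃ b ∈ H, g = a⁻¹ * b)
    (i : I) (q : Brandt G I) :
    ∃ s ∈ row H i, ∃ t ∈ row H i, q = inv s * t ∧ s * inv s = t * inv t := by
  obtain _ | ⟨k, g, l⟩ := q
  · exact ⟨0, zero_mem_row H i, 0, zero_mem_row H i, rfl, rfl⟩
  · obtain ⟨a, ha, b, hb, rfl⟩ := hH g
    refine ⟨some (i, a, k), some_mem_row ha i k, some (i, b, l), some_mem_row hb i l, ?_, ?_⟩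
    · rw [inv_some_mul_some]
    · rw [some_mul_inv_some, some_mul_inv_some]

end Brandt

theorem stmt_18_general {G I : Type*} [Group G] [DecidableEq I]
    (H : Set G) (Hmul : ∀ a ∈ H, ∀ b ∈ H, a * b ∈ H)
    (Horder : ∀ g : G, ∃ a ∈ H, ∃ b ∈ H, g = a⁻¹ * b)
    (i : I)
    (Si : Set (Brandt G I))
    (hSi : Si = {x | x = 0 ∨ ∃ h ∈ H, ∃ j : I, x = some (i, h, j)}) :
    (∀ a ∈ Si, ∀ b ∈ Si, a * b ∈ Si) ∧
    ∀ q : Brandt G I, ∃ s ∈ Si, ∃ t ∈ Si,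
      q = Brandt.inv s * t ∧ s * Brandt.inv s = t * Brandt.inv t := by
  subst hSi
  exact ⟨Brandt.mul_mem_row Hmul i, Brandt.exists_eq_inv_mul_row Horder i⟩

theorem stmt_18 {G I : Type*} [Group G] [DecidableEq I]
    (H : Set G) (Hmul : ∀ a ∈ H, ∀ b ∈ H, a * b ∈ H)
    (Horder : ∀ g : G, ∃ a ∈ H, ∃ b ∈ H, g = a⁻¹ * b)
    (hI : ∃ j k : I, j ≠ k) (i : I)
    (Si : Set (Brandt G I))
    (hSi : Si = {x | x = 0 ∨ ∃ h ∈ H, ∃ j : I, x = some (i, h, j)}) :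
    (∀ a ∈ Si, ∀ b ∈ Si, a * b ∈ Si) ∧
    ∀ q : Brandt G I, ∃ s ∈ Si, ∃ t ∈ Si,
      q = Brandt.inv s * t ∧ s * Brandt.inv s = t * Brandt.inv t :=
  stmt_18_general H Hmul Horder i Si hSi
end

section
/- Let S be a primitive ample semigroup with zero. Then S is categorical at 0 if and only if for all nonzero a, b ∈ S: ab ≠ 0 ⟺ a* = b⁺. -/
/-- The relation L* on a semigroup, defined via S¹ = WithOne S. -/
def LStar {S : Type*} [SemigroupWithZero S] (a b : S) : Prop :=
  ∀ x y : WithOne S, (a : WithOne S) * x = (a : WithOne S) * y ↔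
    (b : WithOne S) * x = (b : WithOne S) * y

/-- `S` is an ample semigroup, with `plus a` the idempotent in the R*-class of `a`
and `star a` the idempotent in the L*-class of `a`. -/
def IsAmple (S : Type*) [SemigroupWithZero S] (plus star : S → S) : Prop :=
  (∀ a : S, plus a * plus a = plus a ∧ RStar a (plus a)) ∧
  (∀ a : S, star a * star a = star a ∧ LStar a (star a)) ∧
  (∀ e f : S, e * e = e → f * f = f → e * f = f * e) ∧
  (∀ (a e : S), e * e = e → plus (a * e) * a = a * e) ∧
  (∀ (a e : S), e * e = e → a * star (e * a) = e * a)

/-- Every nonzero idempotent is primitive. -/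
def IsPrimitiveSemigroup (S : Type*) [SemigroupWithZero S] : Prop :=
  ∀ e : S, e * e = e → e ≠ 0 →
    ∀ f : S, f * f = f → e * f = f → f * e = f → f = 0 ∨ f = e

theorem RStar.idempotent_mul_self {S : Type*} [SemigroupWithZero S] {a e : S} (he : e * e = e)
    (h : RStar a e) : e * a = a := by
  have := (h (e : WithOne S) 1).mpr (by rw [one_mul, ← WithOne.coe_mul, he])
  rwa [one_mul, ← WithOne.coe_mul, WithOne.coe_inj] at this

namespace LStar

variable {S : Type*} [SemigroupWithZero S] {a b c : S}

theorem symm (h : LStar a b) : LStar b a := fun x y => (h x y).symm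

theorem trans (h₁ : LStar a b) (h₂ : LStar b c) : LStar a c :=
  fun x y => (h₁ x y).trans (h₂ x y)

theorem mul_right (h : LStar a b) (c : S) : LStar (a * c) (b * c) := by
  intro x y
  simp only [WithOne.coe_mul, mul_assoc]
  exact h (c * x) (c * y)

theorem mul_idempotent_self {e : S} (he : e * e = e) (h : LStar a e) : a * e = a := by
  have := (h (e : WithOne S) 1).mpr (by rw [mul_one, ← WithOne.coe_mul, he])
  rwa [mul_one, ← WithOne.coe_mul, WithOne.coe_inj] at this

theorem eq_of_idempotent {e f : S} (he : e * e = e) (hf : f * f = f) (hcomm : e * f = f * e)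
    (h : LStar e f) : e = f := by
  rw [← h.mul_idempotent_self hf, hcomm, h.symm.mul_idempotent_self he]

end LStar

theorem IsPrimitiveSemigroup.eq_of_mul_ne_zero {S : Type*} [SemigroupWithZero S]
    (hprim : IsPrimitiveSemigroup S) {e f : S} (he : e * e = e) (hf : f * f = f)
    (hcomm : e * f = f * e) (hef : e * f ≠ 0) : e = f := by
  have hidem : e * f * (e * f) = e * f := by
    rw [mul_assoc, ← mul_assoc f, ← hcomm, mul_assoc, hf, ← mul_assoc, he]
  have hle : e * (e * f) = e * f ∧ e * f * e = e * f := by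
    refine ⟨by rw [← mul_assoc, he], ?_⟩
    rw [mul_assoc, ← hcomm, ← mul_assoc, he]
  have hlf : f * (e * f) = e * f ∧ e * f * f = e * f := by
    refine ⟨by rw [← mul_assoc, ← hcomm, mul_assoc, hf], ?_⟩
    rw [mul_assoc, hf]
  have h₁ := (hprim e he (left_ne_zero_of_mul hef) _ hidem hle.1 hle.2).resolve_left hef
  have h₂ := (hprim f hf (right_ne_zero_of_mul hef) _ hidem hlf.1 hlf.2).resolve_left hef
  rw [← h₁, h₂]

namespace IsAmple

variable {S : Type*} [SemigroupWithZero S] {plus star : S → S}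

theorem plus_mul (hS : IsAmple S plus star) (a : S) : plus a * a = a :=
  (hS.1 a).2.idempotent_mul_self (hS.1 a).1

theorem mul_star (hS : IsAmple S plus star) (a : S) : a * star a = a :=
  (hS.2.1 a).2.mul_idempotent_self (hS.2.1 a).1

theorem star_eq_of_lStar (hS : IsAmple S plus star) {a b : S} (h : LStar a b) :
    star a = star b :=
  LStar.eq_of_idempotent (hS.2.1 a).1 (hS.2.1 b).1 (hS.2.2.1 _ _ (hS.2.1 a).1 (hS.2.1 b).1)
    (((hS.2.1 a).2.symm.trans h).trans (hS.2.1 b).2)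

/-- L* is a right congruence, so `a b L* a* b = b⁺ b = b`. -/
theorem star_mul_of_star_eq_plus (hS : IsAmple S plus star) {a b : S}
    (h : star a = plus b) : star (a * b) = star b := by
  apply hS.star_eq_of_lStar
  simpa only [h, hS.plus_mul] using (hS.2.1 a).2.mul_right b

theorem star_mul_plus_ne_zero (hS : IsAmple S plus star) {a b : S} (hab : a * b ≠ 0) :
    star a * plus b ≠ 0 := by
  intro h
  apply hab
  calc a * b = a * star a * (plus b * b) := by rw [hS.mul_star, hS.plus_mul]
    _ = a * (star a * plus b) * b := by simp only [mul_assoc]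
    _ = 0 := by rw [h, mul_zero, zero_mul]

theorem star_eq_plus_of_mul_ne_zero (hS : IsAmple S plus star) (hprim : IsPrimitiveSemigroup S)
    {a b : S} (hab : a * b ≠ 0) : star a = plus b :=
  hprim.eq_of_mul_ne_zero (hS.2.1 a).1 (hS.1 b).1 (hS.2.2.1 _ _ (hS.2.1 a).1 (hS.1 b).1)
    (hS.star_mul_plus_ne_zero hab)

end IsAmple

theorem stmt_19 {S : Type*} [SemigroupWithZero S] (plus star : S → S)
    (hample : IsAmple S plus star) (hprim : IsPrimitiveSemigroup S) :
    CategoricalAtZero S ↔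
      ∀ a b : S, a ≠ 0 → b ≠ 0 → (a * b ≠ 0 ↔ star a = plus b) := by
  constructor
  · intro hcat a b ha hb
    refine ⟨hample.star_eq_plus_of_mul_ne_zero hprim, fun h => ?_⟩
    have := hcat a (star a) b (by rwa [hample.mul_star]) (by rwa [h, hample.plus_mul])
    rwa [hample.mul_star] at this
  · intro hP a b c hab hbc
    have ha := left_ne_zero_of_mul hab
    have hb := right_ne_zero_of_mul hab
    have hc := right_ne_zero_of_mul hbc
    refine (hP (a * b) c hab hc).mpr ?_
    rw [hample.star_mul_of_star_eq_plus ((hP a b ha hb).mp hab)]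
    exact (hP b c hb hc).mp hbc
end
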